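/- arXiv:2405.13180 — 2 statements merged into one kernel-verified Lean document; each statement's English description precedes it below -/
import Mathlib

section
/- Suppose that for every x ∈ ℝ^{d_x} the operator norm bound ‖(I − K H) ∘ DF(x)‖ ≤ λ holds for some constant λ ∈ (0,1). Let the true signal satisfy x_t^true = F(x_{t−1}^true) and the observations y_t = H x_t^true + γ η_t for t ≥ 1, where the η_t are i.i.d. random vectors in ℝ^{d_y} with E‖η_t‖ ≤ A for some constant A > 0. Let the operational 3DVar filter, which uses the true dynamics, satisfy x_t^o = (I − K H) F(x_{t−1}^o) + K y_t for t ≥ 1. Then there exists a constant c > 0 depending only on ‖K‖ and A such that limsup_{t→∞} E‖x_t^o − x_t^true‖ ≤ c γ/(1 − λ). -/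
/-!
Write `L = I - K H` and `eₜ = xₜᵒ - xₜᵗʳᵘᵉ`. Since `xₜ₊₁ᵗʳᵘᵉ = F(xₜᵗʳᵘᵉ)`, the update gives
`eₜ₊₁ = L F(xₜᵒ) - L F(xₜᵗʳᵘᵉ) + γ K ηₜ₊₁`, and the mean value inequality for `L ∘ F`
(whose derivative has norm `≤ λ`) yields `‖eₜ₊₁‖ ≤ λ ‖eₜ‖ + γ ‖K‖ ‖ηₜ₊₁‖`. Taking expectations,
`aₜ = E‖eₜ‖` satisfies `aₜ₊₁ ≤ λ aₜ + γ ‖K‖ A`, so `aₜ ≤ λᵗ a₀ + γ ‖K‖ A / (1 - λ)`.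
-/

open MeasureTheory Filter ProbabilityTheory

abbrev Ex (d : ℕ) := EuclideanSpace ℝ (Fin d)

section Contraction

variable {E F G : Type*} [NormedAddCommGroup E] [NormedSpace ℝ E]
  [NormedAddCommGroup F] [NormedSpace ℝ F] [NormedAddCommGroup G] [NormedSpace ℝ G]

theorem ContinuousLinearMap.norm_map_sub_le_of_norm_comp_fderiv_le (L : F →L[ℝ] G)
    {f : E → F} (hf : Differentiable ℝ f) {C : ℝ} (hC : ∀ x, ‖L.comp (fderiv ℝ f x)‖ ≤ C)
    (a b : E) : ‖L (f a) - L (f b)‖ ≤ C * ‖a - b‖ := by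
  have hLf : ∀ x, HasFDerivAt (fun z => L (f z)) (L.comp (fderiv ℝ f x)) x :=
    fun x => L.hasFDerivAt.comp x (hf x).hasFDerivAt
  exact convex_univ.norm_image_sub_le_of_norm_fderiv_le
    (fun x _ => (hLf x).differentiableAt) (fun x _ => (hLf x).fderiv ▸ hC x)
    (Set.mem_univ b) (Set.mem_univ a)

theorem norm_analysis_update_sub_le (K : F →L[ℝ] E) (H : E →L[ℝ] F) {f : E → E} {lam : ℝ}
    (hf : ∀ a b, ‖(ContinuousLinearMap.id ℝ E - K.comp H) (f a)
      - (ContinuousLinearMap.id ℝ E - K.comp H) (f b)‖ ≤ lam * ‖a - b‖)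
    {γ : ℝ} (hγ : 0 ≤ γ) (u v : E) (w : F) :
    ‖(ContinuousLinearMap.id ℝ E - K.comp H) (f u) + K (H (f v) + γ • w) - f v‖
      ≤ lam * ‖u - v‖ + γ * ‖K‖ * ‖w‖ := by
  set L := ContinuousLinearMap.id ℝ E - K.comp H
  have hsplit : L (f u) + K (H (f v) + γ • w) - f v = (L (f u) - L (f v)) + γ • K w := by
    simp only [L, map_add, map_smul, sub_apply,
      ContinuousLinearMap.coe_comp, Function.comp_apply, ContinuousLinearMap.id_apply]
    abel
  calc ‖L (f u) + K (H (f v) + γ • w) - f v‖ = ‖(L (f u) - L (f v)) + γ • K w‖ := by rw [hsplit]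
    _ ≤ ‖L (f u) - L (f v)‖ + ‖γ • K w‖ := norm_add_le _ _
    _ ≤ lam * ‖u - v‖ + γ * (‖K‖ * ‖w‖) := by
        rw [norm_smul, Real.norm_of_nonneg hγ]
        gcongr
        exacts [hf u v, K.le_opNorm w]
    _ = lam * ‖u - v‖ + γ * ‖K‖ * ‖w‖ := by ring

end Contraction

theorem integral_le_mul_integral_add_of_le {Ω : Type*} [MeasurableSpace Ω] {μ : Measure Ω}
    {f g h : Ω → ℝ} (hg : Integrable g μ) (hh : Integrable h μ) (hf : Integrable f μ)
    {lam c A : ℝ} (hc : 0 ≤ c) (hfgh : ∀ ω, f ω ≤ lam * g ω + c * h ω) (hA : ∫ ω, h ω ∂μ ≤ A) :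
    ∫ ω, f ω ∂μ ≤ lam * ∫ ω, g ω ∂μ + c * A :=
  calc ∫ ω, f ω ∂μ ≤ ∫ ω, (lam * g ω + c * h ω) ∂μ :=
        integral_mono hf ((hg.const_mul lam).add (hh.const_mul c)) hfgh
    _ = lam * ∫ ω, g ω ∂μ + c * ∫ ω, h ω ∂μ := by
        rw [integral_add (hg.const_mul lam) (hh.const_mul c), integral_const_mul,
          integral_const_mul]
    _ ≤ lam * ∫ ω, g ω ∂μ + c * A := by gcongr

section AffineRecursion

variable {a : ℕ → ℝ} {lam B : ℝ}

theorem le_pow_mul_add_div_of_le_mul_add (hlam0 : 0 ≤ lam) (hlam1 : lam < 1)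
    (hB : 0 ≤ B) (ha : ∀ t, a (t + 1) ≤ lam * a t + B) (t : ℕ) :
    a t ≤ lam ^ t * a 0 + B / (1 - lam) := by
  have hsub : 0 < 1 - lam := by linarith
  induction t with
  | zero => simpa using div_nonneg hB hsub.le
  | succ n ih =>
    calc a (n + 1) ≤ lam * a n + B := ha n
      _ ≤ lam * (lam ^ n * a 0 + B / (1 - lam)) + B := by gcongr
      _ = lam ^ (n + 1) * a 0 + B / (1 - lam) := by field_simp; ring

theorem limsup_le_div_of_le_mul_add (hnonneg : ∀ t, 0 ≤ a t) (hlam0 : 0 ≤ lam)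
    (hlam1 : lam < 1) (hB : 0 ≤ B) (ha : ∀ t, a (t + 1) ≤ lam * a t + B) :
    limsup a atTop ≤ B / (1 - lam) := by
  have hlim : Tendsto (fun t => lam ^ t * a 0 + B / (1 - lam)) atTop (nhds (B / (1 - lam))) := by
    simpa using ((tendsto_pow_atTop_nhds_zero_of_lt_one hlam0 hlam1).mul_const (a 0)).add_const
      (B / (1 - lam))
  calc limsup a atTop ≤ limsup (fun t => lam ^ t * a 0 + B / (1 - lam)) atTop :=
        limsup_le_limsup (Eventually.of_forall (le_pow_mul_add_div_of_le_mul_add hlam0 hlam1 hB ha))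
          (isCoboundedUnder_le_of_eventually_le atTop (Eventually.of_forall hnonneg))
          hlim.isBoundedUnder_le
    _ = B / (1 - lam) := hlim.limsup_eq

end AffineRecursion

theorem stmt_1_general {dx dy : ℕ}
    {Ω : Type} [MeasurableSpace Ω] (μ : Measure Ω)
    (H : Ex dx →L[ℝ] Ex dy) (K : Ex dy →L[ℝ] Ex dx)
    (A : ℝ) (hA : 0 < A) :
    ∃ c > 0,
      ∀ (F : Ex dx → Ex dx), ContDiff ℝ 1 F →
      ∀ lam : ℝ, lam ∈ Set.Ioo (0 : ℝ) 1 →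
      (∀ x : Ex dx,
        ‖(ContinuousLinearMap.id ℝ (Ex dx) - K.comp H).comp (fderiv ℝ F x)‖ ≤ lam) →
      ∀ γ : ℝ, 0 ≤ γ →
      ∀ η : ℕ → Ω → Ex dy,
        (∀ t : ℕ, Measurable (η t)) →
        iIndepFun η μ →
        (∀ s t : ℕ, IdentDistrib (η s) (η t) μ μ) →
        (∀ t : ℕ, Integrable (fun ω => ‖η t ω‖) μ) →
        (∀ t : ℕ, ∫ ω, ‖η t ω‖ ∂μ ≤ A) →
      ∀ (xtrue : ℕ → Ex dx) (y : ℕ → Ω → Ex dy) (xo : ℕ → Ω → Ex dx),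
        (∀ t : ℕ, xtrue (t + 1) = F (xtrue t)) →
        (∀ (t : ℕ) (ω : Ω), y (t + 1) ω = H (xtrue (t + 1)) + γ • η (t + 1) ω) →
        (∀ (t : ℕ) (ω : Ω), xo (t + 1) ω =
          (ContinuousLinearMap.id ℝ (Ex dx) - K.comp H) (F (xo t ω)) + K (y (t + 1) ω)) →
        (∀ t : ℕ, Integrable (fun ω => ‖xo t ω - xtrue t‖) μ) →
        limsup (fun t => ∫ ω, ‖xo t ω - xtrue t‖ ∂μ) atTop ≤ c * γ / (1 - lam) := by
  refine ⟨‖K‖ * A + 1, by positivity, ?_⟩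
  intro F hF lam ⟨hlam0, hlam1⟩ hcontr γ hγ η _ _ _ hηint hηA xtrue y xo hxtrue hy hxo hint
  have hcontract := ContinuousLinearMap.norm_map_sub_le_of_norm_comp_fderiv_le _
    (hF.differentiable one_ne_zero) hcontr
  have hstep : ∀ t, ∫ ω, ‖xo (t + 1) ω - xtrue (t + 1)‖ ∂μ
      ≤ lam * ∫ ω, ‖xo t ω - xtrue t‖ ∂μ + γ * ‖K‖ * A := by
    refine fun t => integral_le_mul_integral_add_of_le (hint t) (hηint (t + 1)) (hint (t + 1))
      (by positivity) (fun ω => ?_) (hηA (t + 1))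
    rw [hxo, hy, hxtrue]
    exact norm_analysis_update_sub_le K H hcontract hγ _ _ _
  calc limsup (fun t => ∫ ω, ‖xo t ω - xtrue t‖ ∂μ) atTop ≤ γ * ‖K‖ * A / (1 - lam) :=
        limsup_le_div_of_le_mul_add (fun t => integral_nonneg fun ω => norm_nonneg _)
          hlam0.le hlam1 (by positivity) hstep
    _ ≤ (‖K‖ * A + 1) * γ / (1 - lam) := by
        gcongr ?_ / _
        nlinarith [mul_nonneg (norm_nonneg K) hA.le]

/-- Long-time accuracy of the operational 3DVar filter (the one using the true
dynamics `F`): there is a constant `c > 0`, depending only on `‖K‖` and `A`, such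
that for any true dynamics, contraction constant `lam ∈ (0,1)`, noise level `γ ≥ 0`,
i.i.d. noises with `E‖η_t‖ ≤ A`, signal, observations, and filter as in the 3DVar
setting, `limsup_{t→∞} E‖x_t^o - x_t^true‖ ≤ c γ / (1 - lam)`. -/
theorem stmt_1 {dx dy : ℕ} (hdx : 0 < dx) (hdy : 0 < dy)
    {Ω : Type} [MeasurableSpace Ω] (μ : Measure Ω) [IsProbabilityMeasure μ]
    (H : Ex dx →L[ℝ] Ex dy) (K : Ex dy →L[ℝ] Ex dx)
    (A : ℝ) (hA : 0 < A) :
    ∃ c > 0,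
      ∀ (F : Ex dx → Ex dx), ContDiff ℝ 1 F →
      ∀ lam : ℝ, lam ∈ Set.Ioo (0 : ℝ) 1 →
      (∀ x : Ex dx,
        ‖(ContinuousLinearMap.id ℝ (Ex dx) - K.comp H).comp (fderiv ℝ F x)‖ ≤ lam) →
      ∀ γ : ℝ, 0 ≤ γ →
      ∀ η : ℕ → Ω → Ex dy,
        (∀ t : ℕ, Measurable (η t)) →
        iIndepFun η μ →
        (∀ s t : ℕ, IdentDistrib (η s) (η t) μ μ) →
        (∀ t : ℕ, Integrable (fun ω => ‖η t ω‖) μ) →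
        (∀ t : ℕ, ∫ ω, ‖η t ω‖ ∂μ ≤ A) →
      ∀ (xtrue : ℕ → Ex dx) (y : ℕ → Ω → Ex dy) (xo : ℕ → Ω → Ex dx),
        (∀ t : ℕ, xtrue (t + 1) = F (xtrue t)) →
        (∀ (t : ℕ) (ω : Ω), y (t + 1) ω = H (xtrue (t + 1)) + γ • η (t + 1) ω) →
        (∀ (t : ℕ) (ω : Ω), xo (t + 1) ω =
          (ContinuousLinearMap.id ℝ (Ex dx) - K.comp H) (F (xo t ω)) + K (y (t + 1) ω)) →
        (∀ t : ℕ, Integrable (fun ω => ‖xo t ω - xtrue t‖) μ) →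
        limsup (fun t => ∫ ω, ‖xo t ω - xtrue t‖ ∂μ) atTop ≤ c * γ / (1 - lam) :=
  stmt_1_general μ H K A hA
end

section
/- Suppose that for every x ∈ ℝ^{d_x} the operator norm bound ‖(I − K H) ∘ DF(x)‖ ≤ λ holds for some constant λ ∈ (0,1), and that ‖(I − K H)(F_s(x) − F(x))‖ ≤ ε for every x ∈ ℝ^{d_x}. Let the true signal satisfy x_t^true = F(x_{t−1}^true) for t ≥ 1, suppose the observations are noise-free, y_t = H x_t^true, and let the surrogate 3DVar filter satisfy x_t^s = (I − K H) F_s(x_{t−1}^s) + K y_t for t ≥ 1. Then limsup_{t→∞} ‖x_t^s − x_t^true‖ ≤ ε/(1 − λ). -/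
/-!
The error `e_t = ‖x_t^s - x_t^true‖` obeys `e_{t+1} ≤ λ e_t + ε`: since `y_t = H x_t^true`, the
error is `L (F_s(x^s) - F(x^s)) + (L (F x^s) - L (F x^true))` with `L = I - K H`, the first term is
bounded by `ε`, and the mean value inequality makes `L ∘ F` a `λ`-contraction. Hence
`e_t - ε/(1-λ) ≤ λ^t (e_0 - ε/(1-λ))`, whose right-hand side tends to `0`.
-/

open Filter

section Contraction

variable {E G W : Type*} [NormedAddCommGroup E] [NormedSpace ℝ E]
  [NormedAddCommGroup G] [NormedSpace ℝ G] [NormedAddCommGroup W] [NormedSpace ℝ W]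

theorem norm_map_comp_sub_le_of_norm_comp_fderiv_le {F : E → W} (hF : Differentiable ℝ F)
    (L : W →L[ℝ] G) {lam : ℝ} (hderiv : ∀ x, ‖L.comp (fderiv ℝ F x)‖ ≤ lam) (a b : E) :
    ‖L (F a) - L (F b)‖ ≤ lam * ‖a - b‖ := by
  have hdiff : ∀ x ∈ Set.univ, DifferentiableAt ℝ (L ∘ F) x :=
    fun x _ => L.differentiableAt.comp x (hF x)
  have hbound : ∀ x ∈ Set.univ, ‖fderiv ℝ (L ∘ F) x‖ ≤ lam := fun x _ => by
    rw [(L.hasFDerivAt.comp x (hF x).hasFDerivAt).fderiv]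
    exact hderiv x
  exact convex_univ.norm_image_sub_le_of_norm_fderiv_le hdiff hbound trivial trivial

end Contraction

section AffineRecursion

variable {u : ℕ → ℝ} {lam ε : ℝ}

theorem sub_div_one_sub_le_pow_mul_of_le_mul_add (hlam0 : 0 ≤ lam) (hlam1 : lam < 1)
    (hstep : ∀ t, u (t + 1) ≤ lam * u t + ε) (t : ℕ) :
    u t - ε / (1 - lam) ≤ lam ^ t * (u 0 - ε / (1 - lam)) := by
  have hfix : lam * (ε / (1 - lam)) + ε = ε / (1 - lam) := by
    field_simp [(sub_pos.2 hlam1).ne']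
    ring
  induction t with
  | zero => simp
  | succ t ih =>
    calc u (t + 1) - ε / (1 - lam) ≤ lam * (u t - ε / (1 - lam)) := by linarith [hstep t]
      _ ≤ lam * (lam ^ t * (u 0 - ε / (1 - lam))) := mul_le_mul_of_nonneg_left ih hlam0
      _ = lam ^ (t + 1) * (u 0 - ε / (1 - lam)) := by ring

theorem limsup_le_div_one_sub_of_le_mul_add (hu : ∀ t, 0 ≤ u t) (hlam0 : 0 ≤ lam)
    (hlam1 : lam < 1) (hstep : ∀ t, u (t + 1) ≤ lam * u t + ε) :
    limsup u atTop ≤ ε / (1 - lam) := by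
  set c := ε / (1 - lam)
  have hbound : ∀ t, u t ≤ lam ^ t * (u 0 - c) + c := fun t => by
    linarith [sub_div_one_sub_le_pow_mul_of_le_mul_add hlam0 hlam1 hstep t]
  have htend : Tendsto (fun t : ℕ => lam ^ t * (u 0 - c) + c) atTop (nhds c) := by
    simpa using
      ((tendsto_pow_atTop_nhds_zero_of_lt_one hlam0 hlam1).mul_const (u 0 - c)).add_const c
  calc limsup u atTop ≤ limsup (fun t : ℕ => lam ^ t * (u 0 - c) + c) atTop :=
        limsup_le_limsup (Eventually.of_forall hbound)
          (isCoboundedUnder_le_of_le atTop hu) htend.isBoundedUnder_le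
    _ = c := htend.limsup_eq

end AffineRecursion

theorem threeDVar_error_eq_of_noiseFree {E Y : Type*} [NormedAddCommGroup E] [NormedSpace ℝ E]
    [NormedAddCommGroup Y] [NormedSpace ℝ Y] (F Fs : E → E) (H : E →L[ℝ] Y) (K : Y →L[ℝ] E)
    (xtrue xs : E) :
    let L := ContinuousLinearMap.id ℝ E - K.comp H
    (L (Fs xs) + K (H (F xtrue))) - F xtrue
      = L (Fs xs - F xs) + (L (F xs) - L (F xtrue)) := by
  simp only [sub_apply, ContinuousLinearMap.id_apply, ContinuousLinearMap.comp_apply, map_sub]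
  abel

theorem stmt_8_general {dx dy : ℕ}
    (F Fs : Ex dx → Ex dx) (hF : ContDiff ℝ 1 F)
    (H : Ex dx →L[ℝ] Ex dy) (K : Ex dy →L[ℝ] Ex dx)
    (lam : ℝ) (hlam : lam ∈ Set.Ioo (0 : ℝ) 1)
    (hderiv : ∀ x : Ex dx,
      ‖(ContinuousLinearMap.id ℝ (Ex dx) - K.comp H).comp (fderiv ℝ F x)‖ ≤ lam)
    (ε : ℝ)
    (hsur : ∀ x : Ex dx,
      ‖(ContinuousLinearMap.id ℝ (Ex dx) - K.comp H) (Fs x - F x)‖ ≤ ε)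
    (xtrue : ℕ → Ex dx) (y : ℕ → Ex dy) (xs : ℕ → Ex dx)
    (hxtrue : ∀ t : ℕ, xtrue (t + 1) = F (xtrue t))
    (hy : ∀ t : ℕ, y t = H (xtrue t))
    (hxs : ∀ t : ℕ, xs (t + 1) =
      (ContinuousLinearMap.id ℝ (Ex dx) - K.comp H) (Fs (xs t)) + K (y (t + 1))) :
    limsup (fun t => ‖xs t - xtrue t‖) atTop ≤ ε / (1 - lam) := by
  have hcontract := norm_map_comp_sub_le_of_norm_comp_fderiv_le
    (hF.differentiable one_ne_zero) _ hderiv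
  refine limsup_le_div_one_sub_of_le_mul_add (fun t => norm_nonneg _) hlam.1.le hlam.2
    fun t => ?_
  rw [hxs t, hy (t + 1), hxtrue t, threeDVar_error_eq_of_noiseFree]
  calc _ ≤ ε + lam * ‖xs t - xtrue t‖ :=
        (norm_add_le _ _).trans (add_le_add (hsur _) (hcontract _ _))
    _ = lam * ‖xs t - xtrue t‖ + ε := add_comm _ _

/-- With noise-free observations `y_t = H x_t^true`, the surrogate 3DVar filter
satisfies the long-time accuracy bound `limsup_{t→∞} ‖x_t^s - x_t^true‖ ≤ ε/(1 - lam)`. -/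
theorem stmt_8 {dx dy : ℕ} (hdx : 0 < dx) (hdy : 0 < dy)
    (F Fs : Ex dx → Ex dx) (hF : ContDiff ℝ 1 F)
    (H : Ex dx →L[ℝ] Ex dy) (K : Ex dy →L[ℝ] Ex dx)
    (lam : ℝ) (hlam : lam ∈ Set.Ioo (0 : ℝ) 1)
    (hderiv : ∀ x : Ex dx,
      ‖(ContinuousLinearMap.id ℝ (Ex dx) - K.comp H).comp (fderiv ℝ F x)‖ ≤ lam)
    (ε : ℝ)
    (hsur : ∀ x : Ex dx,
      ‖(ContinuousLinearMap.id ℝ (Ex dx) - K.comp H) (Fs x - F x)‖ ≤ ε)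
    (xtrue : ℕ → Ex dx) (y : ℕ → Ex dy) (xs : ℕ → Ex dx)
    (hxtrue : ∀ t : ℕ, xtrue (t + 1) = F (xtrue t))
    (hy : ∀ t : ℕ, y t = H (xtrue t))
    (hxs : ∀ t : ℕ, xs (t + 1) =
      (ContinuousLinearMap.id ℝ (Ex dx) - K.comp H) (Fs (xs t)) + K (y (t + 1))) :
    limsup (fun t => ‖xs t - xtrue t‖) atTop ≤ ε / (1 - lam) :=
  stmt_8_general F Fs hF H K lam hlam hderiv ε hsur xtrue y xs hxtrue hy hxs
end
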